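/- arXiv:math/0703894 — 3 statements merged into one kernel-verified Lean document; each statement's English description precedes it below -/
import Mathlib

section
/- Let σ : (ℕ → ℕ) → (ℕ → ℕ) be an order embedding with respect to the product (pointwise) order, whose range is order-convex. Then there exist a set K ⊆ ℕ, a bijection g : K → ℕ, and a function y : ℕ → ℕ such that for every x : ℕ → ℕ and every n ∈ ℕ: if n ∈ K then σ(x)(n) = x(g(n)) + y(n), and if n ∉ K then σ(x)(n) = y(n). -/
/-!
Because the range of `σ` is order-convex, `σ` preserves and reflects the covering relation, and in
`ι → ℕ` the covers of `x` are exactly the points `x + Pi.single i 1`. So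
`σ (Pi.single m 1) = σ 0 + Pi.single (f m) 1` for an injective `f`. Climbing the chain
`Pi.single m k` one cover at a time, each new unit lands at `f m`: if it landed at `n`, the cover
`σ 0 + Pi.single n 1` of `σ 0` would lie below `σ (Pi.single m (k + 1))`, hence be
`σ (Pi.single m' 1)` with `Pi.single m' 1 ≤ Pi.single m (k + 1)`, i.e. `m' = m`.
For arbitrary `x`, monotonicity gives `σ 0 (f m) + x m ≤ σ x (f m)`; conversely, a point
`σ 0 + Pi.single n c` with `0 < c` below `σ x` is `σ u` for some `u ≤ x`, which forces
`n = f m` and `u = Pi.single m c`, so `c ≤ x m`.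
-/

open Function Set

namespace Pi

variable {ι : Type*} [DecidableEq ι]

lemma single_le_iff_le_apply {i : ι} {c : ℕ} {x : ι → ℕ} : single i c ≤ x ↔ c ≤ x i := by
  refine ⟨fun h ↦ by simpa using h i, fun h j ↦ ?_⟩
  rcases eq_or_ne j i with rfl | hj
  · simpa using h
  · simp [hj]

lemma add_single_le_of_le {a b : ι → ℕ} {i : ι} {c : ℕ} (hab : a ≤ b) (hi : a i + c ≤ b i) :
    a + single i c ≤ b := by
  intro j
  rcases eq_or_ne j i with rfl | hj
  · simpa using hi
  · simpa [hj] using hab j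

lemma covBy_iff_exists_eq_add_single {a b : ι → ℕ} : a ⋖ b ↔ ∃ i, b = a + single i 1 := by
  rw [covBy_iff_exists_right_eq]
  constructor
  · rintro ⟨i, x, hx, rfl⟩
    refine ⟨i, funext fun j ↦ ?_⟩
    rcases eq_or_ne j i with rfl | hj
    · simpa [eq_comm] using hx
    · simp [hj]
  · rintro ⟨i, rfl⟩
    refine ⟨i, a i + 1, by simp, funext fun j ↦ ?_⟩
    rcases eq_or_ne j i with rfl | hj
    · simp
    · simp [hj]

end Pi

namespace OrderEmbedding

lemma exists_le_apply_eq_of_ordConnected {α β : Type*} [Preorder α] [Preorder β] (f : α ↪o β)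
    (hf : (range f).OrdConnected) {a x : α} {b : β} (ha : f a ≤ b) (hx : b ≤ f x) :
    ∃ u ≤ x, f u = b := by
  obtain ⟨u, rfl⟩ := hf.out (mem_range_self a) (mem_range_self x) ⟨ha, hx⟩
  exact ⟨u, f.le_iff_le.1 hx, rfl⟩

variable {ι κ : Type*} [DecidableEq ι] [DecidableEq κ] (σ : (ι → ℕ) ↪o (κ → ℕ))

lemma exists_apply_single_one_eq (hσ : (range σ).OrdConnected) (m : ι) :
    ∃ n, σ (Pi.single m 1) = σ 0 + Pi.single n 1 := by
  have : (0 : ι → ℕ) ⋖ Pi.single m 1 := Pi.covBy_iff_exists_eq_add_single.2 ⟨m, by simp⟩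
  exact Pi.covBy_iff_exists_eq_add_single.1 ((hσ.apply_covBy_apply_iff σ).2 this)

noncomputable def singleIndex (hσ : (range σ).OrdConnected) (m : ι) : κ :=
  (σ.exists_apply_single_one_eq hσ m).choose

variable {σ} (hσ : (range σ).OrdConnected)

lemma apply_single_one (m : ι) :
    σ (Pi.single m 1) = σ 0 + Pi.single (σ.singleIndex hσ m) 1 :=
  (σ.exists_apply_single_one_eq hσ m).choose_spec

lemma singleIndex_injective : Injective (σ.singleIndex hσ) := by
  intro m m' h
  have : σ (Pi.single m 1) = σ (Pi.single m' 1) := by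
    rw [apply_single_one hσ, apply_single_one hσ, h]
  simpa [Pi.single_apply, eq_comm] using congrFun (σ.injective this) m

lemma exists_singleIndex_eq_of_add_single_le {x : ι → ℕ} {n : κ}
    (h : σ 0 + Pi.single n 1 ≤ σ x) : ∃ m, σ.singleIndex hσ m = n ∧ 1 ≤ x m := by
  obtain ⟨u, hux, hu⟩ := σ.exists_le_apply_eq_of_ordConnected hσ le_self_add h
  have hcov : σ 0 ⋖ σ u := Pi.covBy_iff_exists_eq_add_single.2 ⟨n, hu⟩
  obtain ⟨m, rfl⟩ := Pi.covBy_iff_exists_eq_add_single.1 ((hσ.apply_covBy_apply_iff σ).1 hcov)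
  rw [zero_add, apply_single_one hσ, add_right_inj] at hu
  refine ⟨m, ?_, by simpa using hux m⟩
  simpa [Pi.single_apply, eq_comm] using congrFun hu n

lemma apply_single (m : ι) (k : ℕ) :
    σ (Pi.single m k) = σ 0 + Pi.single (σ.singleIndex hσ m) k := by
  induction k with
  | zero => simp
  | succ k ih =>
    have hcov : σ (Pi.single m k) ⋖ σ (Pi.single m (k + 1)) :=
      (hσ.apply_covBy_apply_iff σ).2 <|
        Pi.covBy_iff_exists_eq_add_single.2 ⟨m, by rw [Pi.single_add]⟩
    obtain ⟨n, hn⟩ := Pi.covBy_iff_exists_eq_add_single.1 hcov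
    have hle : σ 0 + Pi.single n 1 ≤ σ (Pi.single m (k + 1)) := by
      rw [hn, ih, add_assoc]
      gcongr
      exact le_add_self
    obtain ⟨m', rfl, hm'⟩ := exists_singleIndex_eq_of_add_single_le hσ hle
    obtain rfl : m' = m := by
      by_contra hne
      simp [hne] at hm'
    rw [hn, ih, add_assoc, ← Pi.single_add]

lemma le_apply_of_add_single_le {x : ι → ℕ} {m : ι} {c : ℕ}
    (h : σ 0 + Pi.single (σ.singleIndex hσ m) c ≤ σ x) : c ≤ x m := by
  obtain ⟨u, hux, hu⟩ := σ.exists_le_apply_eq_of_ordConnected hσ le_self_add h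
  rw [← apply_single hσ, σ.injective.eq_iff] at hu
  subst hu
  simpa using hux m

lemma apply_singleIndex (x : ι → ℕ) (m : ι) :
    σ x (σ.singleIndex hσ m) = σ 0 (σ.singleIndex hσ m) + x m := by
  have h0 : σ 0 ≤ σ x := σ.monotone (zero_le (a := x))
  refine le_antisymm ?_ ?_
  · have := le_apply_of_add_single_le hσ <|
      Pi.add_single_le_of_le h0 (Nat.add_sub_of_le (h0 (σ.singleIndex hσ m))).le
    omega
  · have hx : Pi.single m (x m) ≤ x := Pi.single_le_iff_le_apply.2 le_rfl
    simpa [apply_single hσ] using σ.monotone hx (σ.singleIndex hσ m)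

lemma apply_of_notMem_range {x : ι → ℕ} {n : κ} (hn : n ∉ range (σ.singleIndex hσ)) :
    σ x n = σ 0 n := by
  have h0 : σ 0 ≤ σ x := σ.monotone (zero_le (a := x))
  by_contra hne
  obtain ⟨m, rfl, -⟩ := exists_singleIndex_eq_of_add_single_le hσ <|
    Pi.add_single_le_of_le h0 ((h0 n).lt_of_ne (Ne.symm hne))
  exact hn (mem_range_self m)

end OrderEmbedding

/-- **Structure of product order embeddings of `ℕ^ℕ` with convex range.**
Every order embedding `σ : ℕ^ℕ → ℕ^ℕ` (with respect to the pointwise order) whose range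
is order-convex is of the form `σ(x)(n) = x(g(n)) + y(n)` for `n ∈ K` and
`σ(x)(n) = y(n)` otherwise, for some `K ⊆ ℕ`, a bijection `g : K → ℕ` and `y ∈ ℕ^ℕ`. -/
theorem product_orderEmbedding_convex_range_structure
    (σ : (ℕ → ℕ) → (ℕ → ℕ))
    (hemb : ∀ x y : ℕ → ℕ, σ x ≤ σ y ↔ x ≤ y)
    (hconv : ∀ a b c : ℕ → ℕ, a ∈ Set.range σ → c ∈ Set.range σ →
      a ≤ b → b ≤ c → b ∈ Set.range σ) :
    ∃ (K : Set ℕ) (g : K → ℕ) (y : ℕ → ℕ), Function.Bijective g ∧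
      (∀ (x : ℕ → ℕ) (n : ℕ) (h : n ∈ K), σ x n = x (g ⟨n, h⟩) + y n) ∧
      (∀ (x : ℕ → ℕ) (n : ℕ), n ∉ K → σ x n = y n) := by
  let τ : (ℕ → ℕ) ↪o (ℕ → ℕ) := OrderEmbedding.ofMapLEIff σ hemb
  have hτ : (range τ).OrdConnected := ⟨fun a ha c hc b hb ↦ hconv a b c ha hc hb.1 hb.2⟩
  have hinj := OrderEmbedding.singleIndex_injective hτ
  let e := Equiv.ofInjective _ hinj
  refine ⟨range (τ.singleIndex hτ), e.symm, σ 0, e.symm.bijective, fun x n hn ↦ ?_,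
    fun x n hn ↦ OrderEmbedding.apply_of_notMem_range hτ hn⟩
  obtain ⟨m, rfl⟩ := hn
  rw [Equiv.ofInjective_symm_apply]
  exact (OrderEmbedding.apply_singleIndex hτ x m).trans (add_comm _ _)
end

section
/- Let X be a Polish space (a separable, completely metrizable topological space). Then the space C(X, ℝ) of continuous real-valued functions on X, endowed with the compact-open topology, has the strong Pytkeev property: for every f ∈ C(X, ℝ) there exists a countable family 𝒩 of subsets of C(X, ℝ) such that for every neighborhood U of f and every set A ⊆ C(X, ℝ) with f in the closure of A but f ∉ A, there exists N ∈ 𝒩 with N ⊆ U and N ∩ A infinite. -/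
/-!
Take a countable dense set `D` and, at level `n`, the finite unions of `1/(n+1)`-balls centred
in `D`; the network consists of the sets of functions that are `1/(m+1)`-close to `f` on a
finite intersection of such unions. If a basic neighbourhood of `f` (closeness on a compact `K`)
contained no network set meeting `A` in an infinite set, one could choose, level by level, a
union covering `K` without ever enlarging the trace of the network set on `A`. The resulting
decreasing sequence of sets is totally bounded, so it shrinks onto a compact set `C`. Infinitely
many members of `A` are close to `f` on `C`, hence on some finite stage of the sequence, which
contradicts the finiteness of the initial trace.
-/

open Filter Set Metric Topology

def StrongPytkeevAt {Z : Type*} [TopologicalSpace Z] (z : Z) : Prop :=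
  ∃ 𝒩 : Set (Set Z), 𝒩.Countable ∧
    ∀ U ∈ 𝓝 z, ∀ A : Set Z, z ∈ closure A → z ∉ A → ∃ N ∈ 𝒩, N ⊆ U ∧ (N ∩ A).Infinite

theorem infinite_inter_of_mem_closure_of_notMem {Z : Type*} [TopologicalSpace Z] [T1Space Z]
    {z : Z} {A V : Set Z} (hz : z ∈ closure A) (hzA : z ∉ A) (hV : V ∈ 𝓝 z) :
    (V ∩ A).Infinite := by
  intro hfin
  have hcompl : (V ∩ A)ᶜ ∈ 𝓝 z := hfin.isClosed.isOpen_compl.mem_nhds fun h => hzA h.2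
  obtain ⟨y, ⟨hyV, hy⟩, hyA⟩ := mem_closure_iff_nhds.1 hz _ (inter_mem hV hcompl)
  exact hy ⟨hyV, hyA⟩

theorem Filter.TotallyBounded.le_nhdsSet_setOf_clusterPt {α : Type*} [UniformSpace α]
    [CompleteSpace α] {l : Filter α} (hl : l.TotallyBounded) : l ≤ 𝓝ˢ {x | ClusterPt x l} := by
  refine (hasBasis_nhdsSet _).ge_iff.2 fun O ⟨hO, hlO⟩ => ?_
  by_contra hOl
  have : (l ⊓ 𝓟 Oᶜ).NeBot := ⟨fun h => hOl (mem_iff_inf_principal_compl.2 h)⟩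
  obtain ⟨x, hx⟩ := (hl.mono (inf_le_left : l ⊓ 𝓟 Oᶜ ≤ l)).exists_clusterPt
  have hxO : x ∈ closure Oᶜ := hx.mem_closure_of_mem _ (mem_inf_of_right (mem_principal_self _))
  rw [hO.isClosed_compl.closure_eq] at hxO
  exact hxO (hlO (hx.mono inf_le_left))

theorem Metric.filter_totallyBounded_iff {α : Type*} [PseudoMetricSpace α] {l : Filter α} :
    l.TotallyBounded ↔ ∀ δ > 0, ∃ t : Set α, t.Finite ∧ ⋃ x ∈ t, ball x δ ∈ l := by
  simp only [uniformity_basis_dist.filter_totallyBounded_iff, SetRel.preimage_eq_biUnion]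
  rfl

namespace ContinuousMap

variable {X Y ι : Type*} [TopologicalSpace X]

section PseudoMetric

variable [PseudoMetricSpace Y]

def ballOn (f : C(X, Y)) (G : Set X) (r : ℝ) : Set C(X, Y) :=
  {g | ∀ x ∈ G, dist (f x) (g x) < r}

theorem ballOn_anti (f : C(X, Y)) (r : ℝ) : Antitone fun G => ballOn f G r :=
  fun _ _ hG _ hg x hx => hg x (hG hx)

theorem hasBasis_nhds_ballOn (f : C(X, Y)) :
    (𝓝 f).HasBasis (fun p : Set X × ℝ => IsCompact p.1 ∧ 0 < p.2) fun p => ballOn f p.1 p.2 :=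
  nhds_basis_uniformity' uniformity_basis_dist.compactConvergenceUniformity

theorem eventually_mem_ballOn_of_mem_ballOn_inter [Preorder ι] {F : ι → Set X} (hF : Monotone F)
    (hcover : ∀ x, ∃ i, x ∈ F i) {B : Set C(X, Y)} (hB : B.Finite) (f : C(X, Y)) (G : Set X)
    (r : ℝ) : ∀ᶠ i in atTop, ∀ g ∈ B, g ∈ ballOn f (G ∩ F i) r → g ∈ ballOn f G r := by
  refine (eventually_all_finite hB).2 fun g _ => ?_
  by_cases hg : g ∈ ballOn f G r
  · exact Eventually.of_forall fun _ _ => hg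
  · obtain ⟨x, hxG, hx⟩ : ∃ x ∈ G, ¬dist (f x) (g x) < r := by simpa [ballOn] using hg
    obtain ⟨i₀, hi₀⟩ := hcover x
    filter_upwards [eventually_ge_atTop i₀] with i hi hgi
    exact absurd (hgi x ⟨hxG, hF hi hi₀⟩) hx

theorem exists_antitone_ballOn_inter_subset [SemilatticeSup ι] [Nonempty ι]
    {F : ℕ → ι → Set X} (hmono : ∀ n, Monotone (F n))
    (hcover : ∀ K, IsCompact K → ∀ n, ∃ i, K ⊆ F n i) {𝒢 : Set (Set X)} (huniv : univ ∈ 𝒢)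
    (hinter : ∀ G ∈ 𝒢, ∀ n i, G ∩ F n i ∈ 𝒢) {K : Set X} (hK : IsCompact K) {f : C(X, Y)}
    {r : ℝ} {A : Set C(X, Y)} (hfin : ∀ G ∈ 𝒢, K ⊆ G → (ballOn f G r ∩ A).Finite) :
    ∃ P : ℕ → Set X, Antitone P ∧ (∀ n, ∃ i, P (n + 1) ⊆ F n i) ∧
      ∀ k, ballOn f (P k) r ∩ A ⊆ ballOn f univ r ∩ A := by
  have step : ∀ n, ∀ G ∈ 𝒢, K ⊆ G →
      ∃ i, K ⊆ F n i ∧ ballOn f (G ∩ F n i) r ∩ A ⊆ ballOn f G r ∩ A := by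
    intro n G hG hKG
    obtain ⟨i₀, hi₀⟩ := hcover K hK n
    have hpoint : ∀ x, ∃ i, x ∈ F n i := fun x =>
      (hcover {x} isCompact_singleton n).imp fun _ => singleton_subset_iff.1
    -- Only the finitely many members of the trace at `i₀` can enter the trace of `G`; each one
    -- is expelled as soon as the level contains a point of `G` where it is far from `f`.
    obtain ⟨i, hi, hleave⟩ := ((eventually_ge_atTop i₀).and
      (eventually_mem_ballOn_of_mem_ballOn_inter (hmono n) hpoint
        (hfin _ (hinter G hG n i₀) (subset_inter hKG hi₀)) f G r)).exists
    have hsub : ballOn f (G ∩ F n i) r ⊆ ballOn f (G ∩ F n i₀) r :=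
      ballOn_anti f r (inter_subset_inter_right G (hmono n hi))
    exact ⟨i, hi₀.trans (hmono n hi), fun g ⟨hg, hgA⟩ => ⟨hleave g ⟨hsub hg, hgA⟩ hg, hgA⟩⟩
  choose! next hnextK hnext using step
  let P : ℕ → Set X := fun k => Nat.rec univ (fun n G => G ∩ F n (next n G)) k
  have hP : ∀ k, P k ∈ 𝒢 ∧ K ⊆ P k := by
    intro k
    induction k with
    | zero => exact ⟨huniv, subset_univ K⟩
    | succ n ih => exact ⟨hinter _ ih.1 _ _, subset_inter ih.2 (hnextK n _ ih.1 ih.2)⟩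
  refine ⟨P, antitone_nat_of_succ_le fun n => inter_subset_left,
    fun n => ⟨_, inter_subset_right⟩, fun k => ?_⟩
  induction k with
  | zero => exact subset_rfl
  | succ n ih => exact (hnext n _ (hP n).1 (hP n).2).trans ih

end PseudoMetric

theorem strongPytkeevAt_of_shrinking_covers [MetricSpace Y] [SemilatticeSup ι] [Nonempty ι]
    [Countable ι] {F : ℕ → ι → Set X} (hmono : ∀ n, Monotone (F n))
    (hcover : ∀ K, IsCompact K → ∀ n, ∃ i, K ⊆ F n i)
    (hshrink : ∀ P : ℕ → Set X, Antitone P → (∀ n, ∃ i, P (n + 1) ⊆ F n i) →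
      ∃ C, IsCompact C ∧ ∀ O, IsOpen O → C ⊆ O → ∃ k, P k ⊆ O)
    (f : C(X, Y)) : StrongPytkeevAt f := by
  classical
  set 𝒢 : Set (Set X) := range fun s : Finset (ℕ × ι) => ⋂ p ∈ s, F p.1 p.2
  have huniv : univ ∈ 𝒢 := ⟨∅, by simp⟩
  refine ⟨range fun q : ℕ × Finset (ℕ × ι) => ballOn f (⋂ p ∈ q.2, F p.1 p.2) (1 / (q.1 + 1)),
    countable_range _, fun U hU A hfA hfA' => ?_⟩
  by_contra! hcon
  obtain ⟨⟨K, ε⟩, ⟨hK, hε⟩, hKU⟩ := (hasBasis_nhds_ballOn f).mem_iff.1 hU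
  obtain ⟨m, hm⟩ := exists_nat_one_div_lt hε
  have hfin : ∀ G ∈ 𝒢, K ⊆ G → (ballOn f G (1 / (m + 1)) ∩ A).Finite := by
    rintro _ ⟨s, rfl⟩ hKG
    exact hcon _ ⟨(m, s), rfl⟩ fun g hg => hKU fun x hx => (hg x (hKG hx)).trans hm
  obtain ⟨P, hP, hPF, htrace⟩ := exists_antitone_ballOn_inter_subset hmono hcover huniv
    (by rintro _ ⟨s, rfl⟩ n i; exact ⟨insert (n, i) s, by simp [inter_comm]⟩) hK hfin
  obtain ⟨C, hC, hCP⟩ := hshrink P hP hPF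
  have hnear : (ballOn f C (1 / (m + 1)) ∩ A).Infinite := infinite_inter_of_mem_closure_of_notMem
    hfA hfA' ((hasBasis_nhds_ballOn f).mem_of_mem (i := (C, _)) ⟨hC, Nat.one_div_pos_of_nat⟩)
  obtain ⟨g, ⟨hgC, hgA⟩, hg⟩ := (hnear.sdiff (hfin univ huniv (subset_univ K))).nonempty
  obtain ⟨k, hk⟩ := hCP {x | dist (f x) (g x) < 1 / (m + 1)}
    (isOpen_lt (by fun_prop) continuous_const) hgC
  exact hg (htrace k ⟨fun x hx => hk hx, hgA⟩)

end ContinuousMap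

section BallCover

variable {X : Type*} [PseudoMetricSpace X]

def ballCover (D : Set X) (n : ℕ) (s : Finset D) : Set X :=
  ⋃ x ∈ s, ball (x : X) (1 / (n + 1))

theorem monotone_ballCover (D : Set X) (n : ℕ) : Monotone (ballCover D n) :=
  fun _ _ hst => biUnion_subset_biUnion_left (Finset.coe_subset.2 hst)

theorem exists_subset_ballCover {D : Set X} (hD : Dense D) {K : Set X} (hK : IsCompact K)
    (n : ℕ) : ∃ s, K ⊆ ballCover D n s :=
  hK.elim_finite_subcover (fun x : D => ball (x : X) (1 / (n + 1))) (fun _ => isOpen_ball)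
    fun x _ => by
      obtain ⟨y, hyD, hxy⟩ := hD.exists_dist_lt x Nat.one_div_pos_of_nat
      exact mem_iUnion.2 ⟨⟨y, hyD⟩, hxy⟩

theorem exists_isCompact_forall_isOpen_superset_of_subset_ballCover [CompleteSpace X] {D : Set X}
    {P : ℕ → Set X} (hP : Antitone P) (hPF : ∀ n, ∃ s, P (n + 1) ⊆ ballCover D n s) :
    ∃ C, IsCompact C ∧ ∀ O, IsOpen O → C ⊆ O → ∃ k, P k ⊆ O := by
  set l := ⨅ k, 𝓟 (P k)
  have hl : l.TotallyBounded := by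
    refine filter_totallyBounded_iff.2 fun δ hδ => ?_
    obtain ⟨n, hn⟩ := exists_nat_one_div_lt hδ
    obtain ⟨s, hs⟩ := hPF n
    refine ⟨(↑) '' (s : Set D), s.finite_toSet.image _, mem_iInf_of_mem (n + 1) ?_⟩
    refine mem_principal.2 (hs.trans ?_)
    rw [biUnion_image]
    exact biUnion_mono subset_rfl fun x _ => ball_subset_ball hn.le
  refine ⟨_, hl.isCompact_setOfPred_clusterPt, fun O hO hCO => ?_⟩
  have hOl : O ∈ l := hl.le_nhdsSet_setOf_clusterPt (hO.mem_nhdsSet.2 hCO)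
  simpa using (mem_iInf_of_directed (monotone_principal.comp_antitone hP).directed_ge O).1 hOl

end BallCover

/-- **Tsaban–Zdomskyy.** For each Polish space `X`, the space `C(X, ℝ)` of continuous
real-valued functions on `X`, endowed with the compact-open topology (the default
topology on `C(X, ℝ)` in Mathlib), has the strong Pytkeev property: for every
`f ∈ C(X, ℝ)` there is a countable family `𝒩` of subsets of `C(X, ℝ)` such that for
every neighborhood `U` of `f` and every `A ⊆ C(X, ℝ)` with `f ∈ closure A \ A`,
some `N ∈ 𝒩` satisfies `N ⊆ U` and `N ∩ A` is infinite. -/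
theorem continuousMap_strong_pytkeev (X : Type*) [TopologicalSpace X] [PolishSpace X]
    (f : C(X, ℝ)) :
    ∃ 𝒩 : Set (Set C(X, ℝ)), 𝒩.Countable ∧
      ∀ U ∈ nhds f, ∀ A : Set C(X, ℝ), f ∈ closure A → f ∉ A →
        ∃ N ∈ 𝒩, N ⊆ U ∧ (N ∩ A).Infinite := by
  classical
  let := TopologicalSpace.upgradeIsCompletelyMetrizable X
  obtain ⟨D, hDc, hD⟩ := TopologicalSpace.exists_countable_dense X
  have := hDc.to_subtype
  exact ContinuousMap.strongPytkeevAt_of_shrinking_covers (monotone_ballCover D)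
    (fun K hK => exists_subset_ballCover hD hK)
    (fun _ hP hPF => exists_isCompact_forall_isOpen_superset_of_subset_ballCover hP hPF) f
end

section
/- Every wQN set of reals has the Hurewicz property: if X ⊆ ℝ (with the subspace topology) is a wQN-space, then for every sequence (𝒰ₙ)ₙ∈ℕ of open covers of X there exist finite subfamilies ℱₙ ⊆ 𝒰ₙ such that every x ∈ X belongs to ⋃ℱₙ for all but finitely many n. -/
open Filter

/-- `X` is a wQN-space: every sequence of continuous real-valued functions converging
pointwise to `0` has a subsequence converging quasi-normally, i.e. there is a sequence
`(ε k)` of positive reals converging to `0` such that for each `x`,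
`|f (φ k) x| < ε k` for all but finitely many `k`. -/
def IsWQNSpace (X : Type*) [TopologicalSpace X] : Prop :=
  ∀ f : ℕ → X → ℝ, (∀ n, Continuous (f n)) →
    (∀ x, Tendsto (fun n => f n x) atTop (nhds 0)) →
    ∃ φ : ℕ → ℕ, StrictMono φ ∧
      ∃ ε : ℕ → ℝ, (∀ k, 0 < ε k) ∧ Tendsto ε atTop (nhds 0) ∧
        ∀ x, ∀ᶠ k in atTop, |f (φ k) x| < ε k

/-- `X` has the Hurewicz property `U_fin(𝒪, Γ)`: for every sequence of open covers
`(𝒰 n)` there are finite subfamilies `F n ⊆ 𝒰 n` such that every point belongs to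
`⋃ (F n)` for all but finitely many `n`. -/
def HurewiczProperty (X : Type*) [TopologicalSpace X] : Prop :=
  ∀ 𝒰 : ℕ → Set (Set X),
    (∀ n, (∀ U ∈ 𝒰 n, IsOpen U) ∧ ⋃₀ 𝒰 n = Set.univ) →
    ∃ F : ℕ → Set (Set X), (∀ n, F n ⊆ 𝒰 n ∧ (F n).Finite) ∧
      ∀ x : X, ∀ᶠ n in atTop, x ∈ ⋃₀ F n

/-! Since `X` is Lindelöf, each cover `𝒰 n` may be replaced by a sequence `V n 0, V n 1, …`;
since `X` is perfectly normal, there are continuous `g n m : X → [0, 1]` tending to `0`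
pointwise as `m → ∞` and `< 1` only on `V n 0 ∪ … ∪ V n (m - 1)`. Applying wQN to the single
sequence `m ↦ ∑ₙ 2⁻ⁿ g n m` yields indices `s n` with `g n (s n) x → 0` at every `x`, so the
finite families `{V n j | j < s n}` witness the Hurewicz property. -/

open Set Topology

variable {X : Type*} [TopologicalSpace X]

theorem LindelofSpace.exists_nat_subcover [LindelofSpace X] [Nonempty X] {𝒰 : Set (Set X)}
    (h𝒰 : ∀ U ∈ 𝒰, IsOpen U) (hcover : ⋃₀ 𝒰 = univ) :
    ∃ V : ℕ → Set X, (∀ j, V j ∈ 𝒰) ∧ ⋃ j, V j = univ := by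
  have : Nonempty 𝒰 := by
    obtain ⟨U, hU, -⟩ := mem_sUnion.mp (hcover ▸ mem_univ (Classical.arbitrary X))
    exact ⟨⟨U, hU⟩⟩
  obtain ⟨f, hf⟩ := isLindelof_univ.indexed_countable_subcover (Subtype.val : 𝒰 → Set X)
    (fun U => h𝒰 U U.2) (by rw [← sUnion_eq_iUnion, hcover])
  exact ⟨fun j => f j, fun j => (f j).2, univ_subset_iff.mp hf⟩

theorem IsOpen.exists_continuous_nonneg_pos_iff_mem [PerfectlyNormalSpace X] {U : Set X}
    (hU : IsOpen U) : ∃ f : C(X, ℝ), (∀ x, 0 ≤ f x) ∧ ∀ x, 0 < f x ↔ x ∈ U := by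
  obtain ⟨f, hfU, hf01⟩ :=
    perfectlyNormalSpace_iff_forall_isClosed_preimage_zero.mp ‹_› Uᶜ hU.isClosed_compl
  refine ⟨f, fun x => (hf01 x).1, fun x => ?_⟩
  rw [(hf01 x).1.lt_iff_ne', ← not_iff_not, not_not, ← mem_compl_iff, hfU]
  rfl

theorem exists_continuous_tendsto_zero_of_iUnion_eq_univ [PerfectlyNormalSpace X]
    {V : ℕ → Set X} (hV : ∀ j, IsOpen (V j)) (hcover : ⋃ j, V j = univ) :
    ∃ g : ℕ → X → ℝ, (∀ m, Continuous (g m)) ∧ (∀ m x, g m x ∈ Icc 0 1) ∧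
      (∀ x, Tendsto (fun m => g m x) atTop (𝓝 0)) ∧ ∀ m x, g m x < 1 → ∃ j < m, x ∈ V j := by
  choose h hh0 hhV using fun j => (hV j).exists_continuous_nonneg_pos_iff_mem
  -- `m * ∑_{j<m} h j` grows without bound at every point, since some `h j` is positive there
  set S : ℕ → X → ℝ := fun m x => ∑ j ∈ Finset.range m, h j x
  have hS0 (m x) : 0 ≤ S m x := Finset.sum_nonneg fun j _ => hh0 j x
  refine ⟨fun m x => max 0 (1 - m * S m x), fun m => by fun_prop, fun m x => ⟨le_max_left _ _,
    max_le zero_le_one (sub_le_self _ (mul_nonneg m.cast_nonneg (hS0 m x)))⟩, fun x => ?_,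
    fun m x hlt => ?_⟩
  · obtain ⟨j, hxj⟩ := mem_iUnion.mp (hcover ▸ mem_univ x)
    have hpos := (hhV j x).mpr hxj
    refine tendsto_const_nhds.congr' ?_
    filter_upwards [eventually_gt_atTop j,
      tendsto_natCast_atTop_atTop.eventually_ge_atTop (1 / h j x)] with m hjm hm
    have hSm : h j x ≤ S m x :=
      Finset.single_le_sum (fun i _ => hh0 i x) (Finset.mem_range.mpr hjm)
    have hmS : 1 ≤ m * S m x := calc
      1 = 1 / h j x * h j x := by field_simp
      _ ≤ m * S m x := by gcongr
    exact (max_eq_left (by linarith)).symm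
  · have hmS : 0 < (m : ℝ) * S m x := by linarith [(max_lt_iff.mp hlt).2]
    have hSpos : 0 < S m x := pos_of_mul_pos_right hmS m.cast_nonneg
    obtain ⟨j, hj, hpos⟩ :=
      Finset.exists_lt_of_sum_lt (f := fun _ => (0 : ℝ)) (by simpa using hSpos)
    exact ⟨j, Finset.mem_range.mp hj, (hhV j x).mp hpos⟩

theorem IsWQNSpace.exists_diagonal_tendsto_zero (hX : IsWQNSpace X) {g : ℕ → ℕ → X → ℝ}
    (hcont : ∀ n m, Continuous (g n m)) (hg : ∀ n m x, g n m x ∈ Icc 0 1)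
    (hlim : ∀ n x, Tendsto (fun m => g n m x) atTop (𝓝 0)) :
    ∃ s : ℕ → ℕ, ∀ x, Tendsto (fun n => g n (s n) x) atTop (𝓝 0) := by
  set F : ℕ → X → ℝ := fun m x => ∑' n, (1 / 2 : ℝ) ^ n * g n m x
  have hterm_nonneg (n m x) : 0 ≤ (1 / 2 : ℝ) ^ n * g n m x := by
    have := (hg n m x).1
    positivity
  have hterm_le (n m x) : (1 / 2 : ℝ) ^ n * g n m x ≤ (1 / 2) ^ n :=
    mul_le_of_le_one_right (by positivity) (hg n m x).2
  have hterm_norm (n m x) : ‖(1 / 2 : ℝ) ^ n * g n m x‖ ≤ (1 / 2) ^ n := by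
    rw [Real.norm_of_nonneg (hterm_nonneg n m x)]
    exact hterm_le n m x
  have hFcont (m) : Continuous (F m) :=
    continuous_tsum (fun n => continuous_const.mul (hcont n m)) summable_geometric_two
      fun n x => hterm_norm n m x
  have hFlim (x) : Tendsto (fun m => F m x) atTop (𝓝 0) := by
    simpa only [mul_zero, tsum_zero] using
      tendsto_tsum_of_dominated_convergence summable_geometric_two
        (fun n => (hlim n x).const_mul _) (Eventually.of_forall fun m n => hterm_norm n m x)
  obtain ⟨φ, -, ε, -, hε, hFε⟩ := hX F hFcont hFlim
  choose K hK using fun n : ℕ => eventually_atTop.mp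
    (hε.eventually_lt_const (show (0 : ℝ) < (1 / 2) ^ n * (1 / (n + 1)) by positivity))
  refine ⟨fun n => φ (max (K n) n), fun x => ?_⟩
  obtain ⟨N, hN⟩ := eventually_atTop.mp (hFε x)
  refine squeeze_zero' (Eventually.of_forall fun n => (hg _ _ x).1) ?_
    tendsto_one_div_add_atTop_nhds_zero_nat
  filter_upwards [eventually_ge_atTop N] with n hn
  set k := max (K n) n
  have hFk : F (φ k) x < (1 / 2) ^ n * (1 / (n + 1)) := calc
    F (φ k) x = |F (φ k) x| := (abs_of_nonneg (tsum_nonneg (hterm_nonneg · _ x))).symm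
    _ < ε k := hN k (hn.trans (le_max_right _ _))
    _ < (1 / 2) ^ n * (1 / (n + 1)) := hK n k (le_max_left _ _)
  have hgF : (1 / 2 : ℝ) ^ n * g n (φ k) x ≤ F (φ k) x :=
    (summable_geometric_two.of_nonneg_of_le (hterm_nonneg · _ x) (hterm_le · _ x)).le_tsum n
      fun j _ => hterm_nonneg j _ x
  exact (lt_of_mul_lt_mul_left (hgF.trans_lt hFk) (by positivity)).le

theorem IsWQNSpace.hurewiczProperty [LindelofSpace X] [PerfectlyNormalSpace X]
    (hX : IsWQNSpace X) : HurewiczProperty X := by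
  intro 𝒰 h𝒰
  rcases isEmpty_or_nonempty X with _ | _
  · exact ⟨fun _ => ∅, fun _ => ⟨empty_subset _, finite_empty⟩, isEmptyElim⟩
  choose V hV𝒰 hVcover using fun n => LindelofSpace.exists_nat_subcover (h𝒰 n).1 (h𝒰 n).2
  choose g hgcont hg01 hglim hgV using fun n =>
    exists_continuous_tendsto_zero_of_iUnion_eq_univ (fun j => (h𝒰 n).1 _ (hV𝒰 n j))
      (hVcover n)
  obtain ⟨s, hs⟩ := hX.exists_diagonal_tendsto_zero hgcont hg01 hglim
  refine ⟨fun n => V n '' Iio (s n), fun n => ⟨?_, (finite_Iio _).image _⟩, fun x => ?_⟩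
  · rintro _ ⟨j, -, rfl⟩
    exact hV𝒰 n j
  · filter_upwards [(hs x).eventually_lt_const one_pos] with n hn
    obtain ⟨j, hj, hxj⟩ := hgV n (s n) x hn
    exact ⟨V n j, mem_image_of_mem _ hj, hxj⟩

/-- **Every wQN set of reals has the Hurewicz property.** -/
theorem hurewicz_of_wQN (X : Set ℝ) (h : IsWQNSpace X) : HurewiczProperty X :=
  h.hurewiczProperty
end
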